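/- arXiv:math/0609276 — 2 statements merged into one kernel-verified Lean document; each statement's English description precedes it below -/
import Mathlib

section
/- Let ε ≠ 0, a ≠ 0, B, D, Ω₂, x be real numbers, let z = -(Da/ε)·exp(a(Be^{ax} + xε - Ω₂)/ε), assume z is in the domain of the Lambert W function with W(z)e^{W(z)} = z. If y = (-Be^{ax} - xε + Ω₂)/ε + (1/a)W(z), then ε(y + x) + Be^{ax} + De^{-ay} = Ω₂. -/
/-!
Writing `c = a (B e^{ax} + x ε - Ω₂) / ε`, one has `-a y = c - W`, so the Lambert relation
`W e^W = -(D a / ε) e^c` gives `D e^{-a y} = -(ε / a) W`, which cancels the `W`-term of `ε y`.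
-/

open Real

lemma mul_exp_sub_eq_of_mul_exp_eq {W k c : ℝ} (h : W * exp W = k * exp c) :
    k * exp (c - W) = W := by
  rw [exp_sub, mul_div_assoc', ← h, mul_div_cancel_right₀ _ (exp_ne_zero W)]

theorem stmt_7 (ε a B D Ω₂ x : ℝ) (hε : ε ≠ 0) (ha : a ≠ 0)
    (z : ℝ) (hz : z = -(D * a / ε) * Real.exp (a * (B * Real.exp (a * x) + x * ε - Ω₂) / ε))
    (W : ℝ) (hW : W * Real.exp W = z)
    (y : ℝ) (hy : y = (-B * Real.exp (a * x) - x * ε + Ω₂) / ε + (1 / a) * W) :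
    ε * (y + x) + B * Real.exp (a * x) + D * Real.exp (-(a * y)) = Ω₂ := by
  have hay : -(a * y) = a * (B * exp (a * x) + x * ε - Ω₂) / ε - W := by
    rw [hy]; field_simp; ring
  have hLambert := mul_exp_sub_eq_of_mul_exp_eq (hz ▸ hW)
  have hD : D * exp (-(a * y)) = -(ε / a) * W := by
    rw [hay]
    conv_rhs => rw [← hLambert]
    field_simp
  rw [hD, hy]
  field_simp
  ring
end

section
/- Let ρ, μ, α₁, H, K, σ, λ be real constants with σ ≠ 0, K ≠ 0, ρ ≠ α₁σ², and set δ = (μσ - (H + μ/K)/σ)/(ρ - α₁σ²). Then ξ(x) = δ(1 + λe^{σx}) satisfies the ODE μξ''' + ρ(ξ'² - ξξ'') + α₁(ξξ⁗ - 2ξ'ξ''' + ξ''²) - (H + μ/K)ξ' = 0 for all x ∈ ℝ. -/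
open Real

theorem iteratedDeriv_mul_one_add_mul_exp (δ c σ : ℝ) {n : ℕ} (hn : 0 < n) (x : ℝ) :
    iteratedDeriv n (fun x => δ * (1 + c * exp (σ * x))) x = δ * c * σ ^ n * exp (σ * x) := by
  rw [iteratedDeriv_const_mul_field, iteratedDeriv_const_add hn, iteratedDeriv_const_mul_field,
    iteratedDeriv_exp_const_mul]
  ring

/- On `ξ = δ (1 + λ e^{σx})` the quadratic terms of the ODE cancel, leaving
`σ λ δ e^{σx} (μσ² - (H + μ/K) - δσ(ρ - α₁σ²))`; the choice of `δ` kills the bracket. -/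
theorem stmt_10_general (ρ μ α₁ H K σ lam : ℝ) (hσ : σ ≠ 0)
    (hρ : ρ ≠ α₁ * σ ^ 2)
    (δ : ℝ) (hδ : δ = (μ * σ - (H + μ / K) / σ) / (ρ - α₁ * σ ^ 2))
    (ξ : ℝ → ℝ) (hξ : ξ = fun x => δ * (1 + lam * Real.exp (σ * x))) :
    ∀ x : ℝ,
      μ * iteratedDeriv 3 ξ x +
        ρ * ((deriv ξ x) ^ 2 - ξ x * iteratedDeriv 2 ξ x) +
        α₁ * (ξ x * iteratedDeriv 4 ξ x - 2 * deriv ξ x * iteratedDeriv 3 ξ x +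
          (iteratedDeriv 2 ξ x) ^ 2) -
        (H + μ / K) * deriv ξ x = 0 := by
  intro x
  subst hξ
  simp only [← iteratedDeriv_one,
    iteratedDeriv_mul_one_add_mul_exp δ lam σ (Nat.succ_pos _) x]
  have hδσ : δ * σ * (ρ - α₁ * σ ^ 2) = μ * σ ^ 2 - (H + μ / K) := by
    rw [hδ, mul_right_comm, div_mul_cancel₀ _ (sub_ne_zero.mpr hρ)]
    field_simp
  linear_combination (-(δ * lam * exp (σ * x) * σ)) * hδσ

theorem stmt_10 (ρ μ α₁ H K σ lam : ℝ) (hσ : σ ≠ 0) (hK : K ≠ 0)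
    (hρ : ρ ≠ α₁ * σ ^ 2)
    (δ : ℝ) (hδ : δ = (μ * σ - (H + μ / K) / σ) / (ρ - α₁ * σ ^ 2))
    (ξ : ℝ → ℝ) (hξ : ξ = fun x => δ * (1 + lam * Real.exp (σ * x))) :
    ∀ x : ℝ,
      μ * iteratedDeriv 3 ξ x +
        ρ * ((deriv ξ x) ^ 2 - ξ x * iteratedDeriv 2 ξ x) +
        α₁ * (ξ x * iteratedDeriv 4 ξ x - 2 * deriv ξ x * iteratedDeriv 3 ξ x +
          (iteratedDeriv 2 ξ x) ^ 2) -
        (H + μ / K) * deriv ξ x = 0 :=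
  stmt_10_general ρ μ α₁ H K σ lam hσ hρ δ hδ ξ hξ
end
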